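/- Let α ∈ ℝ, ε > 0, let N ≥ 1, let β_1, …, β_N ∈ ℝ and P_1^*, Q_1^*, …, P_N^*, Q_N^* ∈ ℝ^{d×d}. Suppose r : [0,∞) → ℝ^{d×d} satisfies r(t) = Σ_{j=1}^N e^{α t} { P_j^* cos(β_j t) + Q_j^* sin(β_j t) } + R(t) for t ≥ 0, where ‖R(t)‖ ≤ M e^{(α−ε) t} for all t ≥ 0 and some M > 0. Let f : [0,∞) → ℝ^d be continuous with ∫₀^∞ e^{−α t} |f(t)| dt < ∞. Then lim_{t→∞} ( e^{−α t} ∫₀^t r(t−s) f(s) ds − Σ_{j=1}^N { D_{1,j} sin(β_j t) + D_{2,j} cos(β_j t) } ) = 0, where D_{1,j} = ∫₀^∞ e^{−α s} { P_j^* sin(β_j s) + Q_j^* cos(β_j s) } f(s) ds and D_{2,j} = ∫₀^∞ e^{−α s} { P_j^* cos(β_j s) − Q_j^* sin(β_j s) } f(s) ds. -/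

import Mathlib

open MeasureTheory Set Filter Matrix

/-- Frobenius norm of a real matrix. -/
noncomputable def frob {d e : ℕ} (A : Matrix (Fin d) (Fin e) ℝ) : ℝ :=
  Real.sqrt (∑ i, ∑ j, (A i j) ^ 2)

/-- Euclidean norm on `ℝ^d`. -/
noncomputable def eNorm {d : ℕ} (v : Fin d → ℝ) : ℝ :=
  Real.sqrt (∑ i, (v i) ^ 2)

/-!
By the addition formulas, `cos (β (t - s)) P + sin (β (t - s)) Q` equals
`sin (β t) (sin (β s) P + cos (β s) Q) + cos (β t) (cos (β s) P - sin (β s) Q)`, and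
`e^{-α t} e^{α (t - s)} = e^{-α s}`. Hence `e^{-α t} ∫₀ᵗ r (t - s) f s ds` is
`Σ_j (sin (β_j t) ∫₀ᵗ d₁ⱼ + cos (β_j t) ∫₀ᵗ d₂ⱼ)` plus `e^{-α t} ∫₀ᵗ R (t - s) f s ds`,
where `d₁ⱼ`, `d₂ⱼ` are the integrands of `D_{1,j}`, `D_{2,j}`. The truncated integrals converge
to `D_{1,j}`, `D_{2,j}` and their trigonometric factors are bounded. The remainder is at most
`M ∫₀ᵗ e^{-ε (t - s)} e^{-α s} |f s| ds`, which tends to `0` by dominated convergence.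
-/

open Topology

section FrobeniusNorm

attribute [local instance] Matrix.frobeniusNormedAddCommGroup Matrix.frobeniusNormedSpace

lemma frob_eq_norm {m n : ℕ} (A : Matrix (Fin m) (Fin n) ℝ) : frob A = ‖A‖ := by
  simp [frob, Matrix.frobenius_norm_def, Real.sqrt_eq_rpow, Real.norm_eq_abs]

lemma frob_smul_add_smul_le {m n : ℕ} (a b : ℝ) (P Q : Matrix (Fin m) (Fin n) ℝ) :
    frob (a • P + b • Q) ≤ |a| * frob P + |b| * frob Q := by
  simp only [frob_eq_norm, ← Real.norm_eq_abs, ← norm_smul]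
  exact norm_add_le _ _

end FrobeniusNorm

lemma frob_smul_add_smul_le_add {m n : ℕ} {a b : ℝ} (ha : |a| ≤ 1) (hb : |b| ≤ 1)
    (P Q : Matrix (Fin m) (Fin n) ℝ) : frob (a • P + b • Q) ≤ frob P + frob Q :=
  (frob_smul_add_smul_le a b P Q).trans <| add_le_add
    (mul_le_of_le_one_left (Real.sqrt_nonneg _) ha) (mul_le_of_le_one_left (Real.sqrt_nonneg _) hb)

lemma norm_mulVec_le_frob_mul_eNorm {m n : ℕ} (A : Matrix (Fin m) (Fin n) ℝ) (v : Fin n → ℝ) :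
    ‖A *ᵥ v‖ ≤ frob A * eNorm v := by
  refine (pi_norm_le_iff_of_nonneg (mul_nonneg (Real.sqrt_nonneg _) (Real.sqrt_nonneg _))).2
    fun i => ?_
  have hrow : √(∑ k, A i k ^ 2) ≤ frob A :=
    Real.sqrt_le_sqrt (Finset.single_le_sum (f := fun i => ∑ k, A i k ^ 2)
      (fun _ _ => Finset.sum_nonneg fun _ _ => sq_nonneg _) (Finset.mem_univ i))
  calc ‖(A *ᵥ v) i‖ ≤ √(∑ k, A i k ^ 2) * eNorm v := by
        rw [Real.norm_eq_abs, eNorm, ← Real.sqrt_mul (Finset.sum_nonneg fun _ _ => sq_nonneg _)]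
        exact Real.abs_le_sqrt (Finset.sum_mul_sq_le_sq_mul_sq Finset.univ (A i) v)
    _ ≤ frob A * eNorm v := mul_le_mul_of_nonneg_right hrow (Real.sqrt_nonneg _)

@[fun_prop]
lemma continuous_eNorm {d : ℕ} : Continuous (eNorm : (Fin d → ℝ) → ℝ) := by
  unfold eNorm; fun_prop

lemma measurable_mulVec_of_measurable_entries {m n : ℕ} {K : ℝ → Matrix (Fin m) (Fin n) ℝ}
    {v : ℝ → Fin n → ℝ} (hK : ∀ i k, Measurable fun s => K s i k) (hv : Measurable v) :
    Measurable fun s => K s *ᵥ v s :=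
  measurable_pi_lambda _ fun i => by
    simp only [mulVec, dotProduct]
    exact Finset.measurable_fun_sum _ fun k _ =>
      (hK i k).fun_mul ((measurable_pi_apply k).comp hv)

theorem cos_mul_sub_smul_add_sin_mul_sub_smul {M : Type*} [AddCommGroup M] [Module ℝ M]
    (β t s : ℝ) (P Q : M) :
    Real.cos (β * (t - s)) • P + Real.sin (β * (t - s)) • Q =
      Real.sin (β * t) • (Real.sin (β * s) • P + Real.cos (β * s) • Q) +
        Real.cos (β * t) • (Real.cos (β * s) • P - Real.sin (β * s) • Q) := by
  rw [mul_sub, Real.cos_sub, Real.sin_sub]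
  module

lemma tendsto_integral_Icc_exp_neg_mul_sub_mul {g : ℝ → ℝ} (hg : IntegrableOn g (Ici 0))
    {ε : ℝ} (hε : 0 < ε) :
    Tendsto (fun t => ∫ s in Icc 0 t, Real.exp (-(ε * (t - s))) * g s) atTop (𝓝 0) := by
  have hIcc : ∀ t, ∫ s in Icc 0 t, Real.exp (-(ε * (t - s))) * g s =
      ∫ s in Ici 0, (Iic t).indicator (fun s => Real.exp (-(ε * (t - s))) * g s) s := fun t => by
    rw [integral_indicator measurableSet_Iic, Measure.restrict_restrict measurableSet_Iic,
      Iic_inter_Ici]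
  simp_rw [hIcc]
  have hexp : ∀ s, Tendsto (fun t => Real.exp (-(ε * (t - s)))) atTop (𝓝 0) := fun s =>
    Real.tendsto_exp_atBot.comp <| tendsto_neg_atTop_atBot.comp <|
      (tendsto_atTop_add_const_right _ (-s) tendsto_id).const_mul_atTop hε
  have hlim : ∀ s, Tendsto (fun t => (Iic t).indicator
      (fun s => Real.exp (-(ε * (t - s))) * g s) s) atTop (𝓝 0) := fun s => by
    refine ((hexp s).mul_const (g s)).congr' ?_ |>.trans (by rw [zero_mul])
    filter_upwards [eventually_ge_atTop s] with t hst
    rw [indicator_of_mem (mem_Iic.2 hst)]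
  have hbound : ∀ t, ∀ s, ‖(Iic t).indicator (fun s => Real.exp (-(ε * (t - s))) * g s) s‖ ≤
      ‖g s‖ := fun t s => by
    by_cases hst : s ≤ t
    · rw [indicator_of_mem (mem_Iic.2 hst), norm_mul, Real.norm_of_nonneg (Real.exp_pos _).le]
      exact mul_le_of_le_one_left (norm_nonneg _)
        (Real.exp_le_one_iff.2 (by nlinarith))
    · rw [indicator_of_notMem (by simpa using hst), norm_zero]
      exact norm_nonneg _
  have hmeas : ∀ t, AEStronglyMeasurable
      (fun s => Real.exp (-(ε * (t - s))) * g s) (volume.restrict (Ici 0)) := fun t =>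
    (by fun_prop : Continuous fun s => Real.exp (-(ε * (t - s)))).aestronglyMeasurable.mul
      hg.aestronglyMeasurable
  simpa using tendsto_integral_filter_of_dominated_convergence (fun s => ‖g s‖)
    (Eventually.of_forall fun t => (hmeas t).indicator measurableSet_Iic)
    (Eventually.of_forall fun t => Eventually.of_forall (hbound t)) hg.norm
    (Eventually.of_forall hlim)

lemma tendsto_smul_integral_Icc_sub_integral_Ici {E : Type*} [NormedAddCommGroup E]
    [NormedSpace ℝ E] {G : ℝ → E} (hG : IntegrableOn G (Ici 0)) {c : ℝ → ℝ}
    (hc : ∀ t, |c t| ≤ 1) :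
    Tendsto (fun t => c t • ((∫ s in Icc 0 t, G s) - ∫ s in Ici 0, G s)) atTop (𝓝 0) := by
  have hlim := tendsto_setIntegral_of_monotone (μ := volume) (fun t => measurableSet_Icc)
    (fun _ _ h => Icc_subset_Icc_right h)
    (by rwa [iUnion_Icc_right] : IntegrableOn G (⋃ t, Icc 0 t))
  rw [iUnion_Icc_right] at hlim
  exact IsBoundedUnder.smul_tendsto_zero (isBoundedUnder_of ⟨1, hc⟩)
    (tendsto_sub_nhds_zero_iff.2 hlim)

section DampedIntegrands

variable {d : ℕ} (α β : ℝ) (P Q : Matrix (Fin d) (Fin d) ℝ) (f : ℝ → Fin d → ℝ)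

/-- The integrands of `D_{1,j}` and `D_{2,j}`. -/
noncomputable def integrandD₁ (s : ℝ) : Fin d → ℝ :=
  Real.exp (-(α * s)) • ((Real.sin (β * s) • P + Real.cos (β * s) • Q) *ᵥ f s)

noncomputable def integrandD₂ (s : ℝ) : Fin d → ℝ :=
  Real.exp (-(α * s)) • ((Real.cos (β * s) • P - Real.sin (β * s) • Q) *ᵥ f s)

lemma exp_mul_sub_smul_mulVec_eq (t s : ℝ) :
    Real.exp (α * (t - s)) • ((Real.cos (β * (t - s)) • P + Real.sin (β * (t - s)) • Q) *ᵥ f s) =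
      Real.exp (α * t) • (Real.sin (β * t) • integrandD₁ α β P Q f s +
        Real.cos (β * t) • integrandD₂ α β P Q f s) := by
  have hexp : Real.exp (α * (t - s)) = Real.exp (α * t) * Real.exp (-(α * s)) := by
    rw [← Real.exp_add]; ring_nf
  rw [cos_mul_sub_smul_add_sin_mul_sub_smul, hexp, integrandD₁, integrandD₂]
  simp only [add_mulVec, sub_mulVec, smul_mulVec]
  module

end DampedIntegrands

lemma integrableOn_Ici_exp_neg_smul_mulVec {d : ℕ} {α C : ℝ} {f : ℝ → Fin d → ℝ}
    (hf : Continuous f)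
    (hfint : IntegrableOn (fun t => Real.exp (-(α * t)) * eNorm (f t)) (Ici 0))
    {K : ℝ → Matrix (Fin d) (Fin d) ℝ} (hK : Continuous K) (hKC : ∀ s, frob (K s) ≤ C) :
    IntegrableOn (fun s => Real.exp (-(α * s)) • (K s *ᵥ f s)) (Ici 0) := by
  refine Integrable.mono' (hfint.const_mul C)
    ((by fun_prop : Continuous fun s => Real.exp (-(α * s))).smul
      (hK.matrix_mulVec hf)).aestronglyMeasurable (Eventually.of_forall fun s => ?_)
  have hexp := (Real.exp_pos (-(α * s))).le
  rw [norm_smul, Real.norm_of_nonneg hexp]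
  calc Real.exp (-(α * s)) * ‖K s *ᵥ f s‖
      ≤ Real.exp (-(α * s)) * (frob (K s) * eNorm (f s)) := by
        gcongr; exact norm_mulVec_le_frob_mul_eNorm _ _
    _ ≤ Real.exp (-(α * s)) * (C * eNorm (f s)) := by
        gcongr; exacts [Real.sqrt_nonneg _, hKC s]
    _ = C * (Real.exp (-(α * s)) * eNorm (f s)) := by ring

lemma integrableOn_Ici_integrandD₁ {d : ℕ} {α : ℝ} {f : ℝ → Fin d → ℝ} (hf : Continuous f)
    (hfint : IntegrableOn (fun t => Real.exp (-(α * t)) * eNorm (f t)) (Ici 0))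
    (β : ℝ) (P Q : Matrix (Fin d) (Fin d) ℝ) :
    IntegrableOn (integrandD₁ α β P Q f) (Ici 0) :=
  integrableOn_Ici_exp_neg_smul_mulVec hf hfint (by fun_prop) fun s =>
    frob_smul_add_smul_le_add (Real.abs_sin_le_one _) (Real.abs_cos_le_one _) P Q

lemma integrableOn_Ici_integrandD₂ {d : ℕ} {α : ℝ} {f : ℝ → Fin d → ℝ} (hf : Continuous f)
    (hfint : IntegrableOn (fun t => Real.exp (-(α * t)) * eNorm (f t)) (Ici 0))
    (β : ℝ) (P Q : Matrix (Fin d) (Fin d) ℝ) :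
    IntegrableOn (integrandD₂ α β P Q f) (Ici 0) := by
  refine integrableOn_Ici_exp_neg_smul_mulVec (C := frob P + frob Q) hf hfint (by fun_prop)
    fun s => ?_
  rw [sub_eq_add_neg, ← neg_smul]
  exact frob_smul_add_smul_le_add (Real.abs_cos_le_one _) ((abs_neg _).trans_le
    (Real.abs_sin_le_one _)) P Q

section Remainder

variable {d : ℕ} {α ε M : ℝ} {Rr : ℝ → Matrix (Fin d) (Fin d) ℝ} {f : ℝ → Fin d → ℝ}

lemma norm_mulVec_remainder_le (hRbd : ∀ t ≥ (0 : ℝ), frob (Rr t) ≤ M * Real.exp ((α - ε) * t))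
    {t s : ℝ} (hs : s ≤ t) :
    ‖Rr (t - s) *ᵥ f s‖ ≤ M * Real.exp ((α - ε) * (t - s)) * eNorm (f s) :=
  (norm_mulVec_le_frob_mul_eNorm _ _).trans <|
    mul_le_mul_of_nonneg_right (hRbd _ (sub_nonneg.2 hs)) (Real.sqrt_nonneg _)

lemma integrableOn_Icc_remainder_mulVec (hRmeas : ∀ i k, Measurable fun t => Rr t i k)
    (hRbd : ∀ t ≥ (0 : ℝ), frob (Rr t) ≤ M * Real.exp ((α - ε) * t)) (hf : Continuous f)
    (t : ℝ) : IntegrableOn (fun s => Rr (t - s) *ᵥ f s) (Icc 0 t) := by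
  refine Integrable.mono' (g := fun s => M * Real.exp ((α - ε) * (t - s)) * eNorm (f s))
    (by fun_prop : Continuous _).integrableOn_Icc
    (measurable_mulVec_of_measurable_entries (fun i k => (hRmeas i k).comp (by fun_prop))
      hf.measurable).aestronglyMeasurable ?_
  exact (ae_restrict_iff' measurableSet_Icc).2 <| Eventually.of_forall fun s hs =>
    norm_mulVec_remainder_le hRbd hs.2

lemma tendsto_exp_inv_smul_integral_remainder (hε : 0 < ε) (hf : Continuous f)
    (hfint : IntegrableOn (fun t => Real.exp (-(α * t)) * eNorm (f t)) (Ici 0))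
    (hRbd : ∀ t ≥ (0 : ℝ), frob (Rr t) ≤ M * Real.exp ((α - ε) * t)) :
    Tendsto (fun t => (Real.exp (α * t))⁻¹ • ∫ s in Icc 0 t, Rr (t - s) *ᵥ f s) atTop (𝓝 0) := by
  refine squeeze_zero_norm (fun t => ?_) <| by
    simpa using (tendsto_integral_Icc_exp_neg_mul_sub_mul hfint hε).const_mul M
  rw [← integral_smul, ← integral_const_mul]
  refine norm_integral_le_of_norm_le (by fun_prop : Continuous _).integrableOn_Icc <|
    (ae_restrict_iff' measurableSet_Icc).2 <| Eventually.of_forall fun s hs => ?_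
  have hexp : (Real.exp (α * t))⁻¹ * Real.exp ((α - ε) * (t - s)) =
      Real.exp (-(ε * (t - s))) * Real.exp (-(α * s)) := by
    rw [← Real.exp_neg, ← Real.exp_add, ← Real.exp_add]; ring_nf
  rw [norm_smul, norm_inv, Real.norm_of_nonneg (Real.exp_pos _).le]
  calc (Real.exp (α * t))⁻¹ * ‖Rr (t - s) *ᵥ f s‖
      ≤ (Real.exp (α * t))⁻¹ * (M * Real.exp ((α - ε) * (t - s)) * eNorm (f s)) := by
        gcongr; exact norm_mulVec_remainder_le hRbd hs.2
    _ = M * (Real.exp (-(ε * (t - s))) * (Real.exp (-(α * s)) * eNorm (f s))) := by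
        linear_combination M * eNorm (f s) * hexp

end Remainder

lemma exp_inv_smul_integral_conv_sub_eq {d N : ℕ} {α : ℝ} {β : Fin N → ℝ}
    {P Q : Fin N → Matrix (Fin d) (Fin d) ℝ} {r Rr : ℝ → Matrix (Fin d) (Fin d) ℝ}
    {f : ℝ → Fin d → ℝ}
    (hreq : ∀ t ≥ (0 : ℝ), r t =
      (∑ j, Real.exp (α * t) • (Real.cos (β j * t) • P j + Real.sin (β j * t) • Q j)) + Rr t)
    {t : ℝ} (hRint : IntegrableOn (fun s => Rr (t - s) *ᵥ f s) (Icc 0 t))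
    (hD₁ : ∀ j, IntegrableOn (integrandD₁ α (β j) (P j) (Q j) f) (Icc 0 t))
    (hD₂ : ∀ j, IntegrableOn (integrandD₂ α (β j) (P j) (Q j) f) (Icc 0 t)) :
    (Real.exp (α * t))⁻¹ • (∫ s in Icc 0 t, r (t - s) *ᵥ f s) -
        ∑ j, (Real.sin (β j * t) • (∫ s in Ici 0, integrandD₁ α (β j) (P j) (Q j) f s) +
          Real.cos (β j * t) • ∫ s in Ici 0, integrandD₂ α (β j) (P j) (Q j) f s) =
      (Real.exp (α * t))⁻¹ • (∫ s in Icc 0 t, Rr (t - s) *ᵥ f s) +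
        ∑ j, (Real.sin (β j * t) • ((∫ s in Icc 0 t, integrandD₁ α (β j) (P j) (Q j) f s) -
              ∫ s in Ici 0, integrandD₁ α (β j) (P j) (Q j) f s) +
          Real.cos (β j * t) • ((∫ s in Icc 0 t, integrandD₂ α (β j) (P j) (Q j) f s) -
              ∫ s in Ici 0, integrandD₂ α (β j) (P j) (Q j) f s)) := by
  have hpt : ∀ s ∈ Icc 0 t, r (t - s) *ᵥ f s = Rr (t - s) *ᵥ f s + Real.exp (α * t) •
      ∑ j, (Real.sin (β j * t) • integrandD₁ α (β j) (P j) (Q j) f s +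
        Real.cos (β j * t) • integrandD₂ α (β j) (P j) (Q j) f s) := fun s hs => by
    rw [hreq _ (sub_nonneg.2 hs.2), add_mulVec, sum_mulVec, Finset.smul_sum, add_comm]
    congr 1
    refine Finset.sum_congr rfl fun j _ => ?_
    rw [smul_mulVec, exp_mul_sub_smul_mulVec_eq]
  have hterm : ∀ j, IntegrableOn (fun s =>
      Real.sin (β j * t) • integrandD₁ α (β j) (P j) (Q j) f s +
        Real.cos (β j * t) • integrandD₂ α (β j) (P j) (Q j) f s) (Icc 0 t) := fun j =>
    ((hD₁ j).fun_smul _).fun_add ((hD₂ j).fun_smul _)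
  have hconv : (Real.exp (α * t))⁻¹ • (∫ s in Icc 0 t, r (t - s) *ᵥ f s) =
      (Real.exp (α * t))⁻¹ • (∫ s in Icc 0 t, Rr (t - s) *ᵥ f s) +
        ∑ j, (Real.sin (β j * t) • (∫ s in Icc 0 t, integrandD₁ α (β j) (P j) (Q j) f s) +
          Real.cos (β j * t) • ∫ s in Icc 0 t, integrandD₂ α (β j) (P j) (Q j) f s) := by
    rw [setIntegral_congr_fun measurableSet_Icc hpt,
      integral_add hRint ((integrable_finsetSum _ fun j _ => hterm j).fun_smul _), integral_smul,
      smul_add, smul_smul, inv_mul_cancel₀ (Real.exp_pos _).ne', one_smul,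
      integral_finsetSum _ fun j _ => hterm j]
    congr 1
    refine Finset.sum_congr rfl fun j _ => ?_
    rw [integral_add ((hD₁ j).fun_smul _) ((hD₂ j).fun_smul _), integral_smul, integral_smul]
  rw [hconv, add_sub_assoc, ← Finset.sum_sub_distrib]
  simp only [smul_sub]
  congr 1
  refine Finset.sum_congr rfl fun j _ => ?_
  abel

theorem stmt10_general (d : ℕ) (α ε : ℝ) (hε : 0 < ε) (N : ℕ)
    (β : Fin N → ℝ)
    (Pstar Qstar : Fin N → Matrix (Fin d) (Fin d) ℝ)
    (r Rr : ℝ → Matrix (Fin d) (Fin d) ℝ)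
    (hRmeas : ∀ i k, Measurable fun t => Rr t i k)
    (M : ℝ)
    (hRbd : ∀ t ≥ (0 : ℝ), frob (Rr t) ≤ M * Real.exp ((α - ε) * t))
    (hreq : ∀ t ≥ (0 : ℝ), r t =
      (∑ j, Real.exp (α * t) •
        (Real.cos (β j * t) • Pstar j + Real.sin (β j * t) • Qstar j)) + Rr t)
    (f : ℝ → Fin d → ℝ) (hf : Continuous f)
    (hfint : IntegrableOn (fun t => Real.exp (-(α * t)) * eNorm (f t)) (Ici 0)) :
    Tendsto (fun t : ℝ =>
      ((Real.exp (α * t))⁻¹ • ∫ s in Icc (0 : ℝ) t, (r (t - s)).mulVec (f s)) -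
        ∑ j,
          (Real.sin (β j * t) •
            (∫ s in Ici (0 : ℝ), Real.exp (-(α * s)) •
              ((Real.sin (β j * s) • Pstar j + Real.cos (β j * s) • Qstar j).mulVec (f s))) +
           Real.cos (β j * t) •
            (∫ s in Ici (0 : ℝ), Real.exp (-(α * s)) •
              ((Real.cos (β j * s) • Pstar j - Real.sin (β j * s) • Qstar j).mulVec (f s)))))
      atTop (nhds 0) := by
  have hD₁ := fun j => integrableOn_Ici_integrandD₁ hf hfint (β j) (Pstar j) (Qstar j)
  have hD₂ := fun j => integrableOn_Ici_integrandD₂ hf hfint (β j) (Pstar j) (Qstar j)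
  refine Tendsto.congr (fun t => (exp_inv_smul_integral_conv_sub_eq hreq
    (integrableOn_Icc_remainder_mulVec hRmeas hRbd hf t)
    (fun j => (hD₁ j).mono_set Icc_subset_Ici_self)
    (fun j => (hD₂ j).mono_set Icc_subset_Ici_self)).symm) ?_
  simpa using (tendsto_exp_inv_smul_integral_remainder hε hf hfint hRbd).add
    (tendsto_finsetSum Finset.univ fun j _ =>
      (tendsto_smul_integral_Icc_sub_integral_Ici (hD₁ j) fun t => Real.abs_sin_le_one _).add
        (tendsto_smul_integral_Icc_sub_integral_Ici (hD₂ j) fun t => Real.abs_cos_le_one _))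

/-- deterministic convolution asymptotics, case `n = 0`.
If `r(t) = Σ_j e^{αt}{P_j^* cos(β_j t) + Q_j^* sin(β_j t)} + R(t)` with
`‖R(t)‖ ≤ M e^{(α−ε)t}`, and `f` is continuous with `∫₀^∞ e^{−αt}|f(t)|dt < ∞`, then
`e^{−αt} ∫₀^t r(t−s)f(s)ds − Σ_j {D_{1,j} sin(β_j t) + D_{2,j} cos(β_j t)} → 0`. -/
theorem stmt10 (d : ℕ) (α ε : ℝ) (hε : 0 < ε) (N : ℕ) (hN : 1 ≤ N)
    (β : Fin N → ℝ)
    (Pstar Qstar : Fin N → Matrix (Fin d) (Fin d) ℝ)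
    (r Rr : ℝ → Matrix (Fin d) (Fin d) ℝ)
    (hRmeas : ∀ i k, Measurable fun t => Rr t i k)
    (M : ℝ) (hM : 0 < M)
    (hRbd : ∀ t ≥ (0 : ℝ), frob (Rr t) ≤ M * Real.exp ((α - ε) * t))
    (hreq : ∀ t ≥ (0 : ℝ), r t =
      (∑ j, Real.exp (α * t) •
        (Real.cos (β j * t) • Pstar j + Real.sin (β j * t) • Qstar j)) + Rr t)
    (f : ℝ → Fin d → ℝ) (hf : Continuous f)
    (hfint : IntegrableOn (fun t => Real.exp (-(α * t)) * eNorm (f t)) (Ici 0)) :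
    Tendsto (fun t : ℝ =>
      ((Real.exp (α * t))⁻¹ • ∫ s in Icc (0 : ℝ) t, (r (t - s)).mulVec (f s)) -
        ∑ j,
          (Real.sin (β j * t) •
            (∫ s in Ici (0 : ℝ), Real.exp (-(α * s)) •
              ((Real.sin (β j * s) • Pstar j + Real.cos (β j * s) • Qstar j).mulVec (f s))) +
           Real.cos (β j * t) •
            (∫ s in Ici (0 : ℝ), Real.exp (-(α * s)) •
              ((Real.cos (β j * s) • Pstar j - Real.sin (β j * s) • Qstar j).mulVec (f s)))))
      atTop (nhds 0) :=
  stmt10_general d α ε hε N β Pstar Qstar r Rr hRmeas M hRbd hreq f hf hfint
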